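/- arXiv:1709.04873 — 3 statements merged into one kernel-verified Lean document; each statement's English description precedes it below -/
import Mathlib

section
/- Let (a_i) and (b_i) be nets of contractive bounded operators on a Hilbert space H. If (a_i + b_i)/2 converges to the identity operator in operator norm, then a_i → 1 and b_i → 1 in operator norm. -/
/-!
In an inner product space the unit ball is uniformly convex: by the parallelogram law, two vectors of
norm at most `‖x‖` whose midpoint is `δ`-close to `x` are `√(8 ‖x‖ δ)`-close to each other.
Applied pointwise to `a x`, `b x`, this bounds `‖a - b‖` by `√(8 ‖(a + b)/2 - 1‖)` for
contractions `a`, `b`, so `a - b → 0`, and `a`, `b` are the midpoint `± (a - b)/2`.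
-/

open Filter Topology

section UniformConvexity

variable {𝕜 E : Type*} [RCLike 𝕜] [NormedAddCommGroup E] [InnerProductSpace 𝕜 E]

theorem norm_sub_sq_le_of_norm_le_of_norm_le {u v x : E} (hu : ‖u‖ ≤ ‖x‖) (hv : ‖v‖ ≤ ‖x‖) :
    ‖u - v‖ ^ 2 ≤ 8 * ‖x‖ * ‖(2⁻¹ : 𝕜) • (u + v) - x‖ := by
  have parallelogram : ‖u + v‖ ^ 2 + ‖u - v‖ ^ 2 = 2 * (‖u‖ ^ 2 + ‖v‖ ^ 2) := by
    simpa only [sq] using parallelogram_law_with_norm 𝕜 u v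
  have norm_midpoint : ‖(2⁻¹ : 𝕜) • (u + v)‖ = 2⁻¹ * ‖u + v‖ := by
    rw [norm_smul, norm_inv, RCLike.norm_two]
  have close : ‖x‖ - 2⁻¹ * ‖u + v‖ ≤ ‖(2⁻¹ : 𝕜) • (u + v) - x‖ := by
    rw [← norm_midpoint, norm_sub_rev]
    exact norm_sub_norm_le x _
  have sum_le : ‖u + v‖ ≤ 2 * ‖x‖ := (norm_add_le u v).trans (by linarith)
  have hu2 := pow_le_pow_left₀ (norm_nonneg u) hu 2
  have hv2 := pow_le_pow_left₀ (norm_nonneg v) hv 2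
  calc ‖u - v‖ ^ 2 ≤ 4 * ‖x‖ ^ 2 - ‖u + v‖ ^ 2 := by linarith
    _ ≤ 8 * ‖x‖ * (‖x‖ - 2⁻¹ * ‖u + v‖) := by nlinarith [sq_nonneg (2 * ‖x‖ - ‖u + v‖)]
    _ ≤ 8 * ‖x‖ * ‖(2⁻¹ : 𝕜) • (u + v) - x‖ := by gcongr

theorem ContinuousLinearMap.norm_sub_le_sqrt_of_norm_le_one {a b : E →L[𝕜] E}
    (ha : ‖a‖ ≤ 1) (hb : ‖b‖ ≤ 1) :
    ‖a - b‖ ≤ √(8 * ‖(2⁻¹ : 𝕜) • (a + b) - 1‖) := by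
  set d := ‖(2⁻¹ : 𝕜) • (a + b) - 1‖
  refine opNorm_le_bound _ (Real.sqrt_nonneg _) fun x => ?_
  have hax : ‖a x‖ ≤ ‖x‖ := by simpa using a.le_of_opNorm_le ha x
  have hbx : ‖b x‖ ≤ ‖x‖ := by simpa using b.le_of_opNorm_le hb x
  have hmid : ‖(2⁻¹ : 𝕜) • (a x + b x) - x‖ ≤ d * ‖x‖ := by
    calc _ = ‖((2⁻¹ : 𝕜) • (a + b) - 1) x‖ := by simp
      _ ≤ d * ‖x‖ := le_opNorm _ x
  have hsq : ‖(a - b) x‖ ^ 2 ≤ (√(8 * d) * ‖x‖) ^ 2 := by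
    rw [mul_pow, Real.sq_sqrt (by positivity)]
    calc ‖(a - b) x‖ ^ 2 ≤ 8 * ‖x‖ * ‖(2⁻¹ : 𝕜) • (a x + b x) - x‖ :=
          norm_sub_sq_le_of_norm_le_of_norm_le hax hbx
      _ ≤ 8 * ‖x‖ * (d * ‖x‖) := by gcongr
      _ = 8 * d * ‖x‖ ^ 2 := by ring
  exact (pow_le_pow_iff_left₀ (norm_nonneg _) (by positivity) two_ne_zero).1 hsq

end UniformConvexity

theorem stmt1_general {H : Type*} [NormedAddCommGroup H] [InnerProductSpace ℂ H]
    {ι : Type*} (l : Filter ι)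
    (a b : ι → H →L[ℂ] H)
    (ha : ∀ i, ‖a i‖ ≤ 1) (hb : ∀ i, ‖b i‖ ≤ 1)
    (h : Tendsto (fun i => (2⁻¹ : ℂ) • (a i + b i)) l (nhds (1 : H →L[ℂ] H))) :
    Tendsto a l (nhds (1 : H →L[ℂ] H)) ∧ Tendsto b l (nhds (1 : H →L[ℂ] H)) := by
  have hdist : Tendsto (fun i => √(8 * ‖(2⁻¹ : ℂ) • (a i + b i) - 1‖)) l (𝓝 0) := by
    simpa using ((tendsto_sub_nhds_zero_iff.2 h).norm.const_mul 8).sqrt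
  have hdiff : Tendsto (fun i => (2⁻¹ : ℂ) • (a i - b i)) l (𝓝 0) := by
    have hbound i := ContinuousLinearMap.norm_sub_le_sqrt_of_norm_le_one (ha i) (hb i)
    simpa using (squeeze_zero_norm hbound hdist).const_smul (2⁻¹ : ℂ)
  constructor
  · convert (h.add hdiff) using 1
    · ext i : 1; module
    · simp
  · convert (h.sub hdiff) using 1
    · ext i : 1; module
    · simp

/-- If nets `(a i)`, `(b i)` of contractive bounded operators on a Hilbert space have
midpoints converging in operator norm to the identity, then both nets converge to `1`. -/
theorem stmt1 {H : Type*} [NormedAddCommGroup H] [InnerProductSpace ℂ H] [CompleteSpace H]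
    {ι : Type*} (l : Filter ι) [l.NeBot]
    (a b : ι → H →L[ℂ] H)
    (ha : ∀ i, ‖a i‖ ≤ 1) (hb : ∀ i, ‖b i‖ ≤ 1)
    (h : Tendsto (fun i => (2⁻¹ : ℂ) • (a i + b i)) l (nhds (1 : H →L[ℂ] H))) :
    Tendsto a l (nhds (1 : H →L[ℂ] H)) ∧ Tendsto b l (nhds (1 : H →L[ℂ] H)) :=
  stmt1_general l a b ha hb h
end

section
/- Let C be a nonempty closed convex subset of a Hilbert space H and let ξ be the unique element of minimal norm in C. If x is a bounded operator on H with ‖x‖ ≤ 1 and x(C) ⊆ C, then xξ = ξ. -/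
/-!
The image `x ξ` lies in `C` and has norm at most `‖ξ‖`, so it is also a point of minimal norm
of `C`. In a strictly convex space (such as a Hilbert space) a convex set has at most one point
of minimal norm: the midpoint of two distinct such points would be strictly shorter.
-/

theorem Convex.eq_of_norm_le_of_forall_norm_le {E : Type*} [NormedAddCommGroup E]
    [NormedSpace ℝ E] [StrictConvexSpace ℝ E] {C : Set E} (hC : Convex ℝ C) {a b : E}
    (ha : a ∈ C) (hb : b ∈ C) (hmin : ∀ c ∈ C, ‖a‖ ≤ ‖c‖) (hba : ‖b‖ ≤ ‖a‖) : b = a := by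
  by_contra hne
  have hmid : (1 / 2 : ℝ) • b + (1 / 2 : ℝ) • a ∈ C :=
    hC hb ha (by norm_num) (by norm_num) (by norm_num)
  have hlt : ‖(1 / 2 : ℝ) • b + (1 / 2 : ℝ) • a‖ < ‖a‖ :=
    norm_combo_lt_of_ne hba le_rfl hne (by norm_num) (by norm_num) (by norm_num)
  exact (hmin _ hmid).not_gt hlt

theorem stmt5_general {H : Type*} [NormedAddCommGroup H] [InnerProductSpace ℂ H]
    (C : Set H) (hconv : Convex ℝ C)
    (ξ : H) (hξC : ξ ∈ C) (hmin : ∀ c ∈ C, ‖ξ‖ ≤ ‖c‖)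
    (x : H →L[ℂ] H) (hx : ‖x‖ ≤ 1) (hxC : ∀ c ∈ C, x c ∈ C) :
    x ξ = ξ := by
  -- provides `StrictConvexSpace ℝ H`, via uniform convexity of real inner product spaces
  let _ : InnerProductSpace ℝ H := InnerProductSpace.rclikeToReal ℂ H
  have hxξ : ‖x ξ‖ ≤ ‖ξ‖ := x.le_of_opNorm_le hx ξ |>.trans_eq (one_mul _)
  exact hconv.eq_of_norm_le_of_forall_norm_le hξC (hxC ξ hξC) hmin hxξ

/-- If `ξ` is the (unique) element of minimal norm of a nonempty closed convex set `C`
in a Hilbert space and `x` is a contraction mapping `C` into itself, then `xξ = ξ`. -/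
theorem stmt5 {H : Type*} [NormedAddCommGroup H] [InnerProductSpace ℂ H] [CompleteSpace H]
    (C : Set H) (hne : C.Nonempty) (hcl : IsClosed C) (hconv : Convex ℝ C)
    (ξ : H) (hξC : ξ ∈ C) (hmin : ∀ c ∈ C, ‖ξ‖ ≤ ‖c‖)
    (x : H →L[ℂ] H) (hx : ‖x‖ ≤ 1) (hxC : ∀ c ∈ C, x c ∈ C) :
    x ξ = ξ :=
  stmt5_general C hconv ξ hξC hmin x hx hxC
end

section
/- Let G be a group and θ : G → ℝ with θ(e) = 0 and θ(γ⁻¹) = θ(γ) for all γ ∈ G. If for every t ≥ 0 the function γ ↦ e^{−tθ(γ)} is positive definite on G, then θ is conditionally negative definite. -/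
/-!
Fix real coefficients `c` with `∑ c = 0`. The function
`f t = ∑ i j, c i c j exp (-t θ(γᵢ⁻¹γⱼ))` is nonnegative for `t ≥ 0` by positive definiteness
and vanishes at `t = 0` because `∑ c = 0`, so its derivative at `0`, which is
`-∑ i j, c i c j θ(γᵢ⁻¹γⱼ)`, is nonnegative.
-/

open Finset Set

open scoped ComplexOrder

theorem HasDerivWithinAt.nonneg_of_forall_lt_le {f : ℝ → ℝ} {f' a : ℝ}
    (hf : HasDerivWithinAt f f' (Ioi a) a) (hmin : ∀ t, a < t → f a ≤ f t) : 0 ≤ f' := by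
  refine ge_of_tendsto ((hasDerivWithinAt_iff_tendsto_slope' Set.self_notMem_Ioi).mp hf) ?_
  filter_upwards [self_mem_nhdsWithin] with t ht
  rw [slope_def_field]
  exact div_nonneg (sub_nonneg.mpr (hmin t ht)) (sub_nonneg.mpr ht.le)

theorem hasDerivAt_sum_mul_exp_neg_mul {ι : Type*} [Fintype ι] (A : ι → ι → ℝ) (c : ι → ℝ) :
    HasDerivAt (fun t => ∑ i, ∑ j, c i * c j * Real.exp (-t * A i j))
      (-∑ i, ∑ j, c i * c j * A i j) 0 := by
  simp only [← sum_neg_distrib]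
  refine HasDerivAt.fun_sum fun i _ => HasDerivAt.fun_sum fun j _ => ?_
  have hlin : HasDerivAt (fun t : ℝ => -t * A i j) (-A i j) 0 := by
    simpa using (hasDerivAt_id (0 : ℝ)).neg.mul_const (A i j)
  simpa using hlin.exp.const_mul (c i * c j)

theorem sum_mul_nonpos_of_forall_sum_mul_exp_nonneg {ι : Type*} [Fintype ι]
    (A : ι → ι → ℝ) (c : ι → ℝ) (hc : ∑ i, c i = 0)
    (hexp : ∀ t, 0 < t → 0 ≤ ∑ i, ∑ j, c i * c j * Real.exp (-t * A i j)) :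
    ∑ i, ∑ j, c i * c j * A i j ≤ 0 := by
  have hzero : ∑ i, ∑ j, c i * c j * Real.exp (-0 * A i j) = 0 := by
    simp only [neg_zero, zero_mul, Real.exp_zero, mul_one, ← sum_mul_sum, hc, zero_mul]
  have := (hasDerivAt_sum_mul_exp_neg_mul A c).hasDerivWithinAt.nonneg_of_forall_lt_le
    fun t ht => by simpa only [hzero] using hexp t ht
  linarith

theorem Complex.sum_conj_mul_ofReal {ι : Type*} [Fintype ι] (K : ι → ι → ℝ) (c : ι → ℝ) :
    ∑ i, ∑ j, (starRingEnd ℂ) (c i : ℂ) * c j * (K i j : ℂ) =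
      ((∑ i, ∑ j, c i * c j * K i j : ℝ) : ℂ) := by
  push_cast
  simp only [Complex.conj_ofReal]

theorem stmt11_general {G : Type*} [Group G] (θ : G → ℝ)
    (hpd : ∀ t : ℝ, 0 ≤ t → ∀ (n : ℕ) (γ : Fin n → G) (c : Fin n → ℂ),
      (0 : ℂ) ≤ ∑ i, ∑ j,
        (starRingEnd ℂ) (c i) * c j * (Real.exp (-t * θ ((γ i)⁻¹ * γ j)) : ℂ)) :
    ∀ (n : ℕ) (γ : Fin n → G) (c : Fin n → ℝ), (∑ i, c i) = 0 →
      (∑ i, ∑ j, c i * c j * θ ((γ i)⁻¹ * γ j)) ≤ 0 := by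
  intro n γ c hc
  refine sum_mul_nonpos_of_forall_sum_mul_exp_nonneg _ c hc fun t ht => ?_
  have := hpd t ht.le n γ (fun i => c i)
  rwa [Complex.sum_conj_mul_ofReal (fun i j => Real.exp (-t * θ ((γ i)⁻¹ * γ j))),
    Complex.zero_le_real] at this

/-- If `θ : G → ℝ` vanishes at the identity, is symmetric under inversion, and
`γ ↦ exp(−t θ(γ))` is positive definite for every `t ≥ 0`, then `θ` is conditionally
negative definite. -/
theorem stmt11 {G : Type*} [Group G] (θ : G → ℝ)
    (h1 : θ 1 = 0) (hsymm : ∀ γ : G, θ γ⁻¹ = θ γ)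
    (hpd : ∀ t : ℝ, 0 ≤ t → ∀ (n : ℕ) (γ : Fin n → G) (c : Fin n → ℂ),
      (0 : ℂ) ≤ ∑ i, ∑ j,
        (starRingEnd ℂ) (c i) * c j * (Real.exp (-t * θ ((γ i)⁻¹ * γ j)) : ℂ)) :
    ∀ (n : ℕ) (γ : Fin n → G) (c : Fin n → ℝ), (∑ i, c i) = 0 →
      (∑ i, ∑ j, c i * c j * θ ((γ i)⁻¹ * γ j)) ≤ 0 :=
  stmt11_general θ hpd
end
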